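/- For every ε > 0 there exists C_ε > 0 with the following property. For all dyadic N, N₁, N₂, N₃ ≥ 1, all m ∈ ℤ, and every fixed pair (n, n₂) ∈ (ℤ²)², the number of pairs (n₁, n₃) with (n, n₁, n₂, n₃) ∈ S^{𝐍,(m)} is at most C_ε · (min(N₁, N₃))^ε, uniformly in n, n₂, and m. -/

import Mathlib

/-- Euclidean norm of a lattice point in `ℤ²`. -/
noncomputable def znorm (n : ℤ × ℤ) : ℝ := Real.sqrt ((n.1 : ℝ) ^ 2 + (n.2 : ℝ) ^ 2)

/-- Squared Euclidean norm `|n|²` of `n ∈ ℤ²`, as an integer. -/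
def nsq (n : ℤ × ℤ) : ℤ := n.1 ^ 2 + n.2 ^ 2

/-- `φ(n̄) = |n|² − |n₁|² + |n₂|² − |n₃|²`. -/
def phiFn (n n₁ n₂ n₃ : ℤ × ℤ) : ℤ := nsq n - nsq n₁ + nsq n₂ - nsq n₃

/-- `N` is a dyadic number: `N = 2^k` for some integer `k ≥ 0`. -/
def IsDyadic (N : ℝ) : Prop := ∃ k : ℕ, N = 2 ^ k

/-- `|n| ∼ N`: for dyadic `N ≥ 2` this means `N/2 < |n| ≤ N`; for `N = 1` it means `|n| ≤ 1`. -/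
def simDyadic (N : ℝ) (n : ℤ × ℤ) : Prop :=
  (N = 1 ∧ znorm n ≤ 1) ∨ (N ≠ 1 ∧ N / 2 < znorm n ∧ znorm n ≤ N)

/-- Membership in the set `S^{𝐍,(m)}`. -/
def SMem (N N₁ N₂ N₃ : ℝ) (m : ℤ) (n n₁ n₂ n₃ : ℤ × ℤ) : Prop :=
  n = n₁ - n₂ + n₃ ∧ n ≠ n₁ ∧ n ≠ n₃ ∧ phiFn n n₁ n₂ n₃ = m ∧
    simDyadic N n ∧ simDyadic N₁ n₁ ∧ simDyadic N₂ n₂ ∧ simDyadic N₃ n₃ 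

/-!
Fix `n`, `n₂` and `m`. Then `n₃ = n + n₂ - n₁` is determined by `n₁`, and by the parallelogram
law the condition `φ = m` says that `x = 2 n₁ - (n + n₂)` lies on the circle
`|x|² = |n - n₂|² - 2m`; these points `x` also lie within distance `D = 4 min(N₁, N₃)` of each
other. Three lattice points on a circle `|x|² = R` at mutual distance `≤ D` force `R ≤ D⁶`
(Jarník), and otherwise there are at most two of them; when `R ≤ D⁶` the whole circle carries
at most `r₂(R) ≤ 4 d(R) ≪ R^(ε/6) ≤ D^ε` lattice points, by unique factorisation in `ℤ[i]` and
the divisor bound.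
-/

open Finset

local notation "ℤ[i]" => GaussianInt

section DivisorBound

open Real

lemma add_one_le_mul_two_rpow {δ : ℝ} (hδ : 0 < δ) (k : ℕ) :
    (k + 1 : ℝ) ≤ (1 + (δ * log 2)⁻¹) * 2 ^ (k * δ) := by
  have ha : 0 < δ * log 2 := mul_pos hδ (log_pos one_lt_two)
  have hexp : 1 + k * (δ * log 2) ≤ (2 : ℝ) ^ (k * δ) := by
    rw [rpow_def_of_pos two_pos]
    linarith [add_one_le_exp (log 2 * (k * δ))]
  calc (k + 1 : ℝ) ≤ (1 + (δ * log 2)⁻¹) * (1 + k * (δ * log 2)) := by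
        have hk : (δ * log 2)⁻¹ * (k * (δ * log 2)) = k := by field_simp
        nlinarith [inv_pos.mpr ha, k.cast_nonneg (α := ℝ)]
    _ ≤ _ := by gcongr

lemma add_one_le_rpow_of_two_le_rpow {x δ : ℝ} (hx : 0 ≤ x) (h2 : 2 ≤ x ^ δ) (k : ℕ) :
    (k + 1 : ℝ) ≤ x ^ (k * δ) := by
  rw [mul_comm, rpow_mul hx, rpow_natCast]
  calc (k + 1 : ℝ) ≤ 2 ^ k := by exact_mod_cast Nat.lt_two_pow_self
    _ ≤ _ := by gcongr

lemma Nat.prod_primeFactors_rpow {n : ℕ} (hn : n ≠ 0) (δ : ℝ) :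
    ∏ p ∈ n.primeFactors, (p : ℝ) ^ (n.factorization p * δ) = (n : ℝ) ^ δ := by
  conv_rhs => rw [← Nat.prod_factorization_pow_eq_self hn]
  rw [Nat.prod_factorization_eq_prod_primeFactors, Nat.cast_prod,
    ← finsetProd_rpow _ _ fun p _ => by positivity]
  refine prod_congr rfl fun p _ => ?_
  rw [Nat.cast_pow, ← rpow_natCast, ← rpow_mul (Nat.cast_nonneg p)]

theorem Nat.exists_card_divisors_le_mul_rpow {δ : ℝ} (hδ : 0 < δ) :
    ∃ C > 0, ∀ n : ℕ, n ≠ 0 → (#n.divisors : ℝ) ≤ C * (n : ℝ) ^ δ := by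
  set C₀ : ℝ := 1 + (δ * Real.log 2)⁻¹
  have hC₀ : 1 ≤ C₀ := le_add_of_nonneg_right (inv_nonneg.mpr (by positivity))
  -- `k + 1 ≤ p ^ (k δ)` as soon as `p ^ δ ≥ 2`, i.e. for all primes `p > B`
  set B : ℕ := ⌈(2 : ℝ) ^ δ⁻¹⌉₊
  refine ⟨C₀ ^ (B + 1), by positivity, fun n hn => ?_⟩
  have hfactor : ∀ p ∈ n.primeFactors, (n.factorization p + 1 : ℝ) ≤
      (if p ≤ B then C₀ else 1) * (p : ℝ) ^ (n.factorization p * δ) := by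
    intro p hp
    have hp2 : (2 : ℝ) ≤ p := by exact_mod_cast (Nat.prime_of_mem_primeFactors hp).two_le
    split_ifs with hpB
    · exact (add_one_le_mul_two_rpow hδ _).trans (by gcongr)
    · rw [one_mul]
      refine add_one_le_rpow_of_two_le_rpow (by positivity) ?_ _
      calc (2 : ℝ) = ((2 : ℝ) ^ δ⁻¹) ^ δ := by
            rw [← rpow_mul zero_le_two, inv_mul_cancel₀ hδ.ne', rpow_one]
        _ ≤ (p : ℝ) ^ δ := by
          gcongr
          exact (Nat.le_ceil _).trans (by exact_mod_cast (not_le.mp hpB).le)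
  have hsmall : #(n.primeFactors.filter (· ≤ B)) ≤ B + 1 :=
    (card_le_card fun p hp => mem_range.mpr (Nat.lt_succ_of_le (mem_filter.mp hp).2)).trans
      (card_range _).le
  calc (#n.divisors : ℝ) = ∏ p ∈ n.primeFactors, (n.factorization p + 1 : ℝ) := by
        rw [Nat.card_divisors hn]; push_cast; rfl
    _ ≤ ∏ p ∈ n.primeFactors, (if p ≤ B then C₀ else 1) * (p : ℝ) ^ (n.factorization p * δ) :=
        prod_le_prod (fun _ _ => by positivity) hfactor
    _ = C₀ ^ #(n.primeFactors.filter (· ≤ B)) * (n : ℝ) ^ δ := by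
        rw [prod_mul_distrib, Nat.prod_primeFactors_rpow hn, prod_ite, prod_const_one, mul_one,
          prod_const]
    _ ≤ C₀ ^ (B + 1) * (n : ℝ) ^ δ := by gcongr

end DivisorBound

namespace GaussianInt

lemma norm_eq_sq_add_sq (z : ℤ[i]) : z.norm = z.re ^ 2 + z.im ^ 2 := by
  rw [Zsqrtd.norm_def]; ring

lemma finite_setOf_norm_eq (n : ℤ) : {z : ℤ[i] | z.norm = n}.Finite := by
  refine ((Set.finite_Icc (-n) n).prod (Set.finite_Icc (-n) n)).preimage
    (f := fun z : ℤ[i] => (z.re, z.im)) (fun z _ w _ h => ?_) |>.subset ?_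
  · exact Zsqrtd.ext (congrArg Prod.fst h) (congrArg Prod.snd h)
  · intro z hz
    have h : z.re ^ 2 + z.im ^ 2 = n := (norm_eq_sq_add_sq z).symm.trans hz
    simp only [Set.mem_preimage, Set.mem_prod, Set.mem_Icc]
    refine ⟨⟨?_, ?_⟩, ?_, ?_⟩ <;> nlinarith [sq_nonneg z.re, sq_nonneg z.im]

lemma prime_of_prime_norm {π : ℤ[i]} (h : Prime π.norm) : Prime π := by
  rw [← irreducible_iff_prime]
  refine ⟨fun hu => h.not_isUnit ((Zsqrtd.isUnit_iff_norm_isUnit π).mp hu), fun a b hab => ?_⟩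
  simp only [Zsqrtd.isUnit_iff_norm_isUnit]
  exact h.irreducible.isUnit_or_isUnit (by rw [hab, Zsqrtd.norm_mul])

lemma dvd_or_star_dvd_of_dvd_norm {π z : ℤ[i]} (hπ : Prime π) (h : π ∣ (z.norm : ℤ[i])) :
    π ∣ z ∨ star π ∣ z := by
  rw [Zsqrtd.norm_eq_mul_conj] at h
  refine (hπ.dvd_or_dvd h).imp id fun ⟨c, hc⟩ => ⟨star c, ?_⟩
  rw [← star_star z, hc, star_mul, mul_comm]

lemma setOf_norm_eq_pow_mul_subset {π : ℤ[i]} (hπ : Prime π) (m : ℤ) (k : ℕ) :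
    {z : ℤ[i] | z.norm = π.norm ^ k * m} ⊆
      (fun x : (ℕ × ℕ) × ℤ[i] => π ^ x.1.1 * star π ^ x.1.2 * x.2) ''
        ((antidiagonal k : Set (ℕ × ℕ)) ×ˢ {w | w.norm = m}) := by
  have hnorm : π.norm ≠ 0 := fun h => hπ.ne_zero (Zsqrtd.norm_eq_zero_iff (by norm_num) π |>.mp h)
  induction k with
  | zero => exact fun z hz => ⟨((0, 0), z), ⟨by simp, by simpa using hz⟩, by simp⟩
  | succ k ih =>
    intro z (hz : z.norm = _)
    have hdvd : π ∣ (z.norm : ℤ[i]) := by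
      rw [hz, pow_succ', mul_assoc, Int.cast_mul, Zsqrtd.norm_eq_mul_conj]
      exact (dvd_mul_right π _).mul_right _
    rcases dvd_or_star_dvd_of_dvd_norm hπ hdvd with ⟨w, rfl⟩ | ⟨w, rfl⟩
    · have hw : w.norm = π.norm ^ k * m := by
        rw [Zsqrtd.norm_mul, pow_succ', mul_assoc] at hz
        exact mul_left_cancel₀ hnorm hz
      obtain ⟨⟨⟨a, b⟩, v⟩, ⟨hab, hv⟩, rfl⟩ := ih hw
      refine ⟨⟨⟨a + 1, b⟩, v⟩, ⟨?_, hv⟩, by ring⟩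
      simp only [mem_coe, HasAntidiagonal.mem_antidiagonal] at hab ⊢
      omega
    · have hw : w.norm = π.norm ^ k * m := by
        rw [Zsqrtd.norm_mul, Zsqrtd.norm_conj, pow_succ', mul_assoc] at hz
        exact mul_left_cancel₀ hnorm hz
      obtain ⟨⟨⟨a, b⟩, v⟩, ⟨hab, hv⟩, rfl⟩ := ih hw
      refine ⟨⟨⟨a, b + 1⟩, v⟩, ⟨?_, hv⟩, by ring⟩
      simp only [mem_coe, HasAntidiagonal.mem_antidiagonal] at hab ⊢
      omega

lemma ncard_setOf_norm_eq_pow_mul_le {π : ℤ[i]} (hπ : Prime π) (m : ℤ) (k : ℕ) :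
    {z : ℤ[i] | z.norm = π.norm ^ k * m}.ncard ≤ (k + 1) * {z : ℤ[i] | z.norm = m}.ncard := by
  have hfin := (antidiagonal k).finite_toSet.prod (finite_setOf_norm_eq m)
  calc _ ≤ _ := Set.ncard_le_ncard (setOf_norm_eq_pow_mul_subset hπ m k) (hfin.image _)
    _ ≤ _ := Set.ncard_image_le hfin
    _ = _ := by rw [Set.ncard_prod, Set.ncard_coe_finset, Nat.card_antidiagonal]

lemma setOf_norm_eq_mul_eq_empty {p : ℕ} [Fact p.Prime] (hp : p % 4 = 3) {m : ℤ}
    (hpm : ¬ (p : ℤ) ∣ m) : {z : ℤ[i] | z.norm = p * m} = ∅ := by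
  refine Set.eq_empty_of_forall_notMem fun z (hz : z.norm = p * m) => hpm ?_
  have hdvd : (p : ℤ[i]) ∣ (z.norm : ℤ[i]) := ⟨m, by rw [hz]; push_cast; rfl⟩
  obtain ⟨w, rfl⟩ : (p : ℤ[i]) ∣ z := by
    simpa [star_natCast] using
      dvd_or_star_dvd_of_dvd_norm (prime_of_nat_prime_of_mod_four_eq_three p hp) hdvd
  rw [Zsqrtd.norm_mul, Zsqrtd.norm_natCast, mul_assoc] at hz
  exact ⟨w.norm, mul_left_cancel₀ (by exact_mod_cast (Fact.out : p.Prime).ne_zero) hz.symm⟩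

lemma ncard_setOf_norm_eq_prime_pow_mul_le {p : ℕ} (hp : p.Prime) {m : ℤ}
    (hpm : ¬ (p : ℤ) ∣ m) (k : ℕ) :
    {z : ℤ[i] | z.norm = p ^ k * m}.ncard ≤ (k + 1) * {z : ℤ[i] | z.norm = m}.ncard := by
  have := Fact.mk hp
  by_cases h3 : p % 4 = 3
  · have hπ := prime_of_nat_prime_of_mod_four_eq_three p h3
    have hnorm : (p : ℤ[i]).norm = (p : ℤ) ^ 2 := by rw [Zsqrtd.norm_natCast, sq]
    obtain ⟨j, rfl | rfl⟩ := Nat.even_or_odd' k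
    · calc _ = {z : ℤ[i] | z.norm = (p : ℤ[i]).norm ^ j * m}.ncard := by
            rw [hnorm, ← pow_mul]
        _ ≤ (j + 1) * {z : ℤ[i] | z.norm = m}.ncard := ncard_setOf_norm_eq_pow_mul_le hπ m j
        _ ≤ _ := by gcongr; omega
    · calc _ = {z : ℤ[i] | z.norm = (p : ℤ[i]).norm ^ j * (p * m)}.ncard := by
            rw [hnorm, ← pow_mul, ← mul_assoc, ← pow_succ]
        _ ≤ (j + 1) * {z : ℤ[i] | z.norm = p * m}.ncard :=
            ncard_setOf_norm_eq_pow_mul_le hπ _ j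
        _ ≤ _ := by simp [setOf_norm_eq_mul_eq_empty h3 hpm]
  · obtain ⟨a, b, hab⟩ := Nat.Prime.sq_add_sq h3
    have hnorm : (⟨a, b⟩ : ℤ[i]).norm = p := by
      rw [norm_eq_sq_add_sq, ← hab]; push_cast; rfl
    have hπ : Prime (⟨a, b⟩ : ℤ[i]) :=
      prime_of_prime_norm (hnorm ▸ Nat.prime_iff_prime_int.mp hp)
    simpa [hnorm] using ncard_setOf_norm_eq_pow_mul_le hπ m k

lemma ncard_setOf_norm_eq_one_le : {z : ℤ[i] | z.norm = 1}.ncard ≤ 4 := by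
  have hsub : {z : ℤ[i] | z.norm = 1} ⊆ (({1, -1, ⟨0, 1⟩, ⟨0, -1⟩} : Finset ℤ[i]) : Set ℤ[i]) := by
    intro z (hz : z.norm = 1)
    rw [norm_eq_sq_add_sq] at hz
    obtain ⟨x, y⟩ := z
    have hx : -1 ≤ x ∧ x ≤ 1 := by constructor <;> nlinarith [sq_nonneg y]
    have hy : -1 ≤ y ∧ y ≤ 1 := by constructor <;> nlinarith [sq_nonneg x]
    obtain ⟨hx₁, hx₂⟩ := hx
    obtain ⟨hy₁, hy₂⟩ := hy
    interval_cases x <;> interval_cases y <;> simp_all <;> decide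
  calc _ ≤ _ := Set.ncard_le_ncard hsub (Finset.finite_toSet _)
    _ ≤ 4 := by rw [Set.ncard_coe_finset]; exact Finset.card_le_four

theorem ncard_setOf_norm_eq_le_four_mul_card_divisors (n : ℕ) (hn : n ≠ 0) :
    {z : ℤ[i] | z.norm = n}.ncard ≤ 4 * #n.divisors := by
  induction n using Nat.recOnPrimePow with
  | zero => exact absurd rfl hn
  | one => simpa using ncard_setOf_norm_eq_one_le
  | prime_pow_mul a p k hp hpa _ ih =>
    have hcop : (p ^ k).Coprime a := Nat.Coprime.pow_left k (hp.coprime_iff_not_dvd.mpr hpa)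
    rw [Nat.Coprime.card_divisors_mul hcop, Nat.divisors_prime_pow hp, card_map, card_range]
    push_cast
    calc _ ≤ (k + 1) * {z : ℤ[i] | z.norm = a}.ncard :=
          ncard_setOf_norm_eq_prime_pow_mul_le hp (by exact_mod_cast hpa) k
      _ ≤ (k + 1) * (4 * #a.divisors) := by gcongr; exact ih (by rintro rfl; simp at hn)
      _ = _ := by ring

end GaussianInt

lemma nsq_nonneg (x : ℤ × ℤ) : 0 ≤ nsq x := by unfold nsq; positivity

lemma nsq_pos {x : ℤ × ℤ} (hx : x ≠ 0) : 0 < nsq x := by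
  have : x.1 ≠ 0 ∨ x.2 ≠ 0 := by
    by_contra! h
    exact hx (Prod.ext h.1 h.2)
  unfold nsq
  rcases this with h | h <;> positivity

lemma setOf_nsq_eq_eq_preimage (R : ℤ) :
    {x : ℤ × ℤ | nsq x = R} = (fun x => (⟨x.1, x.2⟩ : ℤ[i])) ⁻¹' {z | z.norm = R} := by
  ext x
  change nsq x = R ↔ Zsqrtd.norm _ = R
  rw [GaussianInt.norm_eq_sq_add_sq]
  rfl

lemma finite_setOf_nsq_eq (R : ℤ) : {x : ℤ × ℤ | nsq x = R}.Finite := by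
  rw [setOf_nsq_eq_eq_preimage]
  exact (GaussianInt.finite_setOf_norm_eq R).preimage fun x _ y _ h =>
    Prod.ext (congrArg Zsqrtd.re h) (congrArg Zsqrtd.im h)

lemma ncard_setOf_nsq_eq (R : ℤ) :
    {x : ℤ × ℤ | nsq x = R}.ncard = {z : ℤ[i] | z.norm = R}.ncard := by
  rw [setOf_nsq_eq_eq_preimage]
  exact Set.ncard_preimage_of_injective_subset_range
    (fun x y h => Prod.ext (congrArg Zsqrtd.re h) (congrArg Zsqrtd.im h))
    fun z _ => ⟨(z.re, z.im), rfl⟩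

theorem exists_ncard_setOf_nsq_eq_le_mul_rpow {δ : ℝ} (hδ : 0 < δ) :
    ∃ C > 0, ∀ R : ℤ, 0 < R → ({x : ℤ × ℤ | nsq x = R}.ncard : ℝ) ≤ C * (R : ℝ) ^ δ := by
  obtain ⟨C, hC, hdiv⟩ := Nat.exists_card_divisors_le_mul_rpow hδ
  refine ⟨4 * C, by positivity, fun R hR => ?_⟩
  lift R to ℕ using hR.le
  have hR0 : R ≠ 0 := by exact_mod_cast hR.ne'
  calc ({x : ℤ × ℤ | nsq x = R}.ncard : ℝ) ≤ 4 * #R.divisors := by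
        rw [ncard_setOf_nsq_eq]
        exact_mod_cast GaussianInt.ncard_setOf_norm_eq_le_four_mul_card_divisors R hR0
    _ ≤ 4 * (C * (R : ℝ) ^ δ) := by gcongr; exact hdiv R hR0
    _ = _ := by push_cast; ring

/-- The circumradius formula `a²b²c² = 4ρ²(2·area)²` for a triangle `p, p + u, p + v` inscribed
in a circle centred at `0`. -/
lemma nsq_mul_nsq_mul_nsq_sub {p u v : ℤ × ℤ} (hu : nsq (p + u) = nsq p)
    (hv : nsq (p + v) = nsq p) :
    nsq u * nsq v * nsq (u - v) = 4 * nsq p * (u.1 * v.2 - u.2 * v.1) ^ 2 := by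
  obtain ⟨p₁, p₂⟩ := p
  obtain ⟨u₁, u₂⟩ := u
  obtain ⟨v₁, v₂⟩ := v
  simp only [nsq, Prod.mk_add_mk, Prod.mk_sub_mk] at hu hv ⊢
  -- `hu` says `2 ⟪p, u⟫ + |u|² = 0`; eliminate `⟪p, u⟫` and `⟪p, v⟫` from the identity
  -- `|⟪p, u⟫ v - ⟪p, v⟫ u|² = det(u, v)² |p|²`
  set a := p₁ * u₁ + p₂ * u₂
  set b := p₁ * v₁ + p₂ * v₂
  set A := u₁ ^ 2 + u₂ ^ 2
  set B := v₁ ^ 2 + v₂ ^ 2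
  linear_combination (A - 2 * a) * B * hu - 2 * (u₁ * v₁ + u₂ * v₂) * (B * hu - 2 * a * hv) +
    (B - 2 * b) * A * hv

/-- Jarník: twice the area of a nondegenerate lattice triangle is a nonzero integer. -/
lemma four_mul_le_of_nsq_eq {p q r : ℤ × ℤ} {R : ℤ} (hp : nsq p = R) (hq : nsq q = R)
    (hr : nsq r = R) (hpq : p ≠ q) (hpr : p ≠ r) (hqr : q ≠ r) :
    4 * R ≤ nsq (q - p) * nsq (r - p) * nsq (q - r) := by
  have key := nsq_mul_nsq_mul_nsq_sub (p := p) (u := q - p) (v := r - p)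
    (by rw [add_sub_cancel, hp, hq]) (by rw [add_sub_cancel, hp, hr])
  rw [sub_sub_sub_cancel_right, hp] at key
  have hpos : 0 < nsq (q - p) * nsq (r - p) * nsq (q - r) := by
    have := nsq_pos (sub_ne_zero.mpr hpq.symm)
    have := nsq_pos (sub_ne_zero.mpr hpr.symm)
    have := nsq_pos (sub_ne_zero.mpr hqr)
    positivity
  set det := (q - p).1 * (r - p).2 - (q - p).2 * (r - p).1
  have hdet : 1 ≤ det ^ 2 := by
    have : det ≠ 0 := by rintro h; rw [h] at key; simp [key] at hpos
    have := sq_pos_of_ne_zero this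
    omega
  have hR : 0 ≤ R := hp ▸ nsq_nonneg p
  nlinarith

lemma znorm_sq (x : ℤ × ℤ) : znorm x ^ 2 = nsq x := by
  rw [znorm, Real.sq_sqrt (by positivity), nsq]
  push_cast
  ring

theorem exists_ncard_le_mul_rpow_of_diam_le {ε : ℝ} (hε : 0 < ε) :
    ∃ C > 0, ∀ (R : ℤ) (D : ℝ) (T : Set (ℤ × ℤ)), 1 ≤ D → T ⊆ {x | nsq x = R} →
      (∀ x ∈ T, ∀ y ∈ T, znorm (x - y) ≤ D) → (T.ncard : ℝ) ≤ C * D ^ ε := by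
  obtain ⟨C, hC, hcircle⟩ := exists_ncard_setOf_nsq_eq_le_mul_rpow (by positivity : 0 < ε / 6)
  refine ⟨max 2 C, by positivity, fun R D T hD hTR hdiam => ?_⟩
  have hDε : 1 ≤ D ^ ε := Real.one_le_rpow hD hε.le
  have hTfin : T.Finite := (finite_setOf_nsq_eq R).subset hTR
  by_cases hT : T.ncard ≤ 2
  · calc (T.ncard : ℝ) ≤ 2 := by exact_mod_cast hT
      _ ≤ max 2 C * 1 := by simp
      _ ≤ _ := by gcongr
  obtain ⟨a, ha, b, hb, c, hc, hab, hac, hbc⟩ := (Set.two_lt_ncard hTfin).mp (by omega)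
  have hR : 0 < R := by
    rcases eq_or_ne a 0 with rfl | ha0
    · exact hTR hb ▸ nsq_pos hab.symm
    · exact hTR ha ▸ nsq_pos ha0
  have hsq : ∀ x ∈ T, ∀ y ∈ T, (nsq (x - y) : ℝ) ≤ D ^ 2 := fun x hx y hy => by
    rw [← znorm_sq]
    exact pow_le_pow_left₀ (Real.sqrt_nonneg _) (hdiam x hx y hy) 2
  have hRD : (R : ℝ) ≤ D ^ 6 := by
    have h4 : ((4 * R : ℤ) : ℝ) ≤ _ := Int.cast_le.mpr
      (four_mul_le_of_nsq_eq (hTR ha) (hTR hb) (hTR hc) hab hac hbc)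
    push_cast at h4
    have := hsq b hb a ha
    have := hsq c hc a ha
    have := hsq b hb c hc
    have : (nsq (b - a) : ℝ) * nsq (c - a) * nsq (b - c) ≤ D ^ 2 * D ^ 2 * D ^ 2 := by
      gcongr <;> exact_mod_cast nsq_nonneg _
    nlinarith
  calc (T.ncard : ℝ) ≤ {x : ℤ × ℤ | nsq x = R}.ncard := by
        exact_mod_cast Set.ncard_le_ncard hTR (finite_setOf_nsq_eq R)
    _ ≤ C * (R : ℝ) ^ (ε / 6) := hcircle R hR
    _ ≤ C * (D ^ 6) ^ (ε / 6) := by gcongr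
    _ = C * D ^ ε := by
        rw [← Real.rpow_natCast, ← Real.rpow_mul (by positivity)]
        ring_nf
    _ ≤ max 2 C * D ^ ε := by gcongr; exact le_max_right _ _

lemma znorm_eq_norm (x : ℤ × ℤ) : znorm x = ‖((x.1 : ℝ) + (x.2 : ℝ) * Complex.I : ℂ)‖ := by
  rw [znorm, Complex.norm_def, Complex.normSq_add_mul_I]

lemma znorm_sub_le (x y : ℤ × ℤ) : znorm (x - y) ≤ znorm x + znorm y := by
  simp only [znorm_eq_norm, Prod.fst_sub, Prod.snd_sub, Int.cast_sub, Complex.ofReal_sub]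
  exact (le_of_eq (congrArg _ (by ring))).trans (norm_sub_le _ _)

lemma znorm_add_self (x : ℤ × ℤ) : znorm (x + x) = 2 * znorm x := by
  simp only [znorm_eq_norm, Prod.fst_add, Prod.snd_add, Int.cast_add, Complex.ofReal_add]
  rw [← Complex.norm_two, ← norm_mul]
  ring_nf

lemma IsDyadic.one_le {N : ℝ} (h : IsDyadic N) : 1 ≤ N := by
  obtain ⟨k, rfl⟩ := h
  exact one_le_pow₀ one_le_two

lemma simDyadic.znorm_le {N : ℝ} {x : ℤ × ℤ} (h : simDyadic N x) : znorm x ≤ N := by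
  rcases h with ⟨rfl, h⟩ | ⟨-, -, h⟩ <;> exact h

section SMem

variable {N N₁ N₂ N₃ : ℝ} {m : ℤ} {n n₁ n₂ n₃ n₁' n₃' : ℤ × ℤ}

lemma SMem.add_eq (h : SMem N N₁ N₂ N₃ m n n₁ n₂ n₃) : n₁ + n₃ = n + n₂ := by
  rw [h.1]; abel

/-- `n₁` and `n₃` are symmetric about `(n + n₂) / 2`, so by the parallelogram law the resonance
condition `φ = m` places `2 n₁ - (n + n₂)` on a fixed circle. -/
lemma SMem.nsq_eq (h : SMem N N₁ N₂ N₃ m n n₁ n₂ n₃) :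
    nsq (n₁ + n₁ - (n + n₂)) = nsq (n₂ - n) - 2 * m := by
  obtain ⟨rfl, -, -, hφ, -⟩ := h
  simp only [phiFn, nsq, Prod.fst_add, Prod.snd_add, Prod.fst_sub, Prod.snd_sub] at hφ ⊢
  linear_combination (-2 : ℤ) * hφ

lemma SMem.eq_of_add_self_sub_eq (h : SMem N N₁ N₂ N₃ m n n₁ n₂ n₃)
    (h' : SMem N N₁ N₂ N₃ m n n₁' n₂ n₃') (he : n₁ + n₁ - (n + n₂) = n₁' + n₁' - (n + n₂)) :
    (n₁, n₃) = (n₁', n₃') := by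
  have h₁ : n₁ = n₁' := by
    have h₁₁ := congrArg Prod.fst he
    have h₁₂ := congrArg Prod.snd he
    simp only [Prod.fst_sub, Prod.fst_add, Prod.snd_sub, Prod.snd_add] at h₁₁ h₁₂
    exact Prod.ext (by omega) (by omega)
  have h₃ := h.add_eq.trans h'.add_eq.symm
  rw [h₁, add_right_inj] at h₃
  rw [h₁, h₃]

lemma SMem.znorm_sub_le_min (h : SMem N N₁ N₂ N₃ m n n₁ n₂ n₃)
    (h' : SMem N N₁ N₂ N₃ m n n₁' n₂ n₃') :
    znorm (n₁ + n₁ - (n + n₂) - (n₁' + n₁' - (n + n₂))) ≤ 4 * min N₁ N₃ := by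
  have h₁ : n₁ + n₁ - (n + n₂) - (n₁' + n₁' - (n + n₂)) = (n₁ - n₁') + (n₁ - n₁') := by abel
  have h₃ : n₁ + n₁ - (n + n₂) - (n₁' + n₁' - (n + n₂)) = (n₃' - n₃) + (n₃' - n₃) := by
    linear_combination (2 : ℤ × ℤ) * (h.add_eq - h'.add_eq)
  rw [mul_min_of_nonneg _ _ (by norm_num : (0 : ℝ) ≤ 4)]
  refine le_min ?_ ?_
  · rw [h₁, znorm_add_self]
    linarith [znorm_sub_le n₁ n₁', h.2.2.2.2.2.1.znorm_le, h'.2.2.2.2.2.1.znorm_le]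
  · rw [h₃, znorm_add_self]
    linarith [znorm_sub_le n₃' n₃, h.2.2.2.2.2.2.2.znorm_le, h'.2.2.2.2.2.2.2.znorm_le]

end SMem

theorem stmt9 (ε : ℝ) (hε : 0 < ε) :
    ∃ C : ℝ, 0 < C ∧ ∀ N N₁ N₂ N₃ : ℝ,
      IsDyadic N → IsDyadic N₁ → IsDyadic N₂ → IsDyadic N₃ → ∀ m : ℤ, ∀ n n₂ : ℤ × ℤ,
      (({p : (ℤ × ℤ) × (ℤ × ℤ) |
          SMem N N₁ N₂ N₃ m n p.1 n₂ p.2}).ncard : ℝ) ≤ C * (min N₁ N₃) ^ ε := by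
  obtain ⟨C, hC, hcluster⟩ := exists_ncard_le_mul_rpow_of_diam_le hε
  refine ⟨C * 4 ^ ε, by positivity, fun N N₁ N₂ N₃ _ hN₁ _ hN₃ m n n₂ => ?_⟩
  set S := {p : (ℤ × ℤ) × (ℤ × ℤ) | SMem N N₁ N₂ N₃ m n p.1 n₂ p.2}
  set f : (ℤ × ℤ) × (ℤ × ℤ) → ℤ × ℤ := fun p => p.1 + p.1 - (n + n₂)
  have hinj : S.InjOn f := fun p hp p' hp' hpp' => hp.eq_of_add_self_sub_eq hp' hpp'
  have hmin : 1 ≤ min N₁ N₃ := le_min hN₁.one_le hN₃.one_le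
  calc (S.ncard : ℝ) = (f '' S).ncard := by rw [hinj.ncard_image]
    _ ≤ C * (4 * min N₁ N₃) ^ ε := hcluster _ _ _ (by linarith)
        (Set.image_subset_iff.mpr fun p hp => hp.nsq_eq)
        (Set.forall_mem_image.mpr fun p hp => Set.forall_mem_image.mpr fun p' hp' =>
          hp.znorm_sub_le_min hp')
    _ = C * 4 ^ ε * (min N₁ N₃) ^ ε := by
        rw [Real.mul_rpow (by norm_num) (by linarith), mul_assoc]
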